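/- Let d, r > 0 be integers with d dividing q−1. Suppose q = q_0^m where q_0 is a prime power with q_0 ≡ 1 (mod d) and d divides m, and let h be a polynomial with coefficients in the subfield F_{q_0} of F_q of order q_0. Then f(x) := x^r · h(x^{(q−1)/d}) is a permutation polynomial of F_q if and only if gcd(r, (q−1)/d) = 1 and h has no roots in μ_d. -/

import Mathlib

/-!
Write `s = (q - 1) / d`, so `c ↦ c ^ s` maps `F_q^×` onto `μ_d`. For any `h`, injectivity of
`c ↦ c ^ r h(c ^ s)` forces `gcd(r, s) = 1` (else some `ω ≠ 1` with `ω ^ r = ω ^ s = 1` collides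
with `1`) and forces `h` to have no root `ζ = c ^ s` in `μ_d` (else `c` collides with `0`).
Conversely, since `q0 ≡ 1 (mod d)` and `d ∣ m`, we have `d (q0 - 1) ∣ q - 1`, so `q0 - 1 ∣ s`;
as `μ_d ⊆ F_{q0}` and `h` has coefficients there, `h(ζ) ^ s = 1` on `μ_d`. Raising `f(a) = f(b)` to
the `s`-th power then gives `a ^ (rs) = b ^ (rs)`, whence `a ^ s = b ^ s` (as `gcd(r, d) = 1`),
then `a ^ r = b ^ r`, and finally `a = b`.
-/

open Polynomial


theorem Nat.mul_sub_one_dvd_pow_sub_one {a d m : ℕ} (ha : a ≡ 1 [MOD d]) (hm : d ∣ m) :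
    d * (a - 1) ∣ a ^ m - 1 := by
  rcases a with _ | b
  · simpa using Nat.sub_eq_zero_of_le (zero_pow_le_one m)
  have hsum : d ∣ ∑ i ∈ Finset.range m, (b + 1) ^ i := by
    rw [← ZMod.natCast_eq_zero_iff] at hm ⊢
    have hb : ((b + 1 : ℕ) : ZMod d) = 1 := by
      simpa using (ZMod.natCast_eq_natCast_iff _ 1 d).2 ha
    push_cast at hb ⊢
    simp [hb, hm]
  rw [← geom_sum_mul_add b m, Nat.add_sub_cancel, Nat.add_sub_cancel]
  exact mul_dvd_mul_right hsum b

theorem IsCyclic.exists_pow_eq_of_pow_eq_one {G : Type*} [CommGroup G] [IsCyclic G] [Finite G]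
    {d s : ℕ} (hcard : Nat.card G = d * s) {ζ : G} (hζ : ζ ^ d = 1) : ∃ c : G, c ^ s = ζ := by
  have hpos : 0 < d * s := hcard ▸ Nat.card_pos
  have hle : (powMonoidHom s : G →* G).range ≤ (powMonoidHom d).ker := by
    rintro _ ⟨c, rfl⟩
    rw [MonoidHom.mem_ker, powMonoidHom_apply, powMonoidHom_apply, ← pow_mul, mul_comm, ← hcard,
      pow_card_eq_one']
  have heq := Subgroup.eq_of_le_of_card_ge hle <| by
    rw [IsCyclic.card_powMonoidHom_range, IsCyclic.card_powMonoidHom_ker, hcard,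
      Nat.gcd_mul_left_left, Nat.gcd_mul_right_left,
      Nat.mul_div_cancel _ (Nat.pos_of_mul_pos_left hpos)]
  exact (heq ▸ hζ : ζ ∈ (powMonoidHom s : G →* G).range)

theorem pow_gcd_eq_pow_gcd {G₀ : Type*} [CommGroupWithZero G₀] {a b : G₀} {m n : ℕ} (hb : b ≠ 0)
    (hm : a ^ m = b ^ m) (hn : a ^ n = b ^ n) : a ^ m.gcd n = b ^ m.gcd n := by
  have key : (a / b) ^ m.gcd n = 1 := by
    rw [pow_gcd_eq_one, div_pow, div_pow, hm, hn, div_self (pow_ne_zero _ hb),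
      div_self (pow_ne_zero _ hb)]
    exact ⟨rfl, rfl⟩
  rwa [div_pow, div_eq_one_iff_eq (pow_ne_zero _ hb)] at key

theorem Polynomial.eval_mem_of_coeff_mem {R S : Type*} [CommRing R] [SetLike S R]
    [SubringClass S R] {K : S} {p : R[X]} (hp : ∀ i, p.coeff i ∈ K) {x : R} (hx : x ∈ K) :
    p.eval x ∈ K := by
  rw [eval_eq_sum_range]
  exact sum_mem fun i _ => mul_mem (hp i) (pow_mem hx i)

namespace Subfield

variable {F : Type*} [Field F] (K : Subfield F) [Finite K]

theorem mem_of_pow_card_eq_self {x : F} (hx : x ^ Nat.card K = x) : x ∈ K := by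
  have := Fintype.ofFinite K
  rw [Nat.card_eq_fintype_card] at hx
  have hsplit : (X ^ Fintype.card K - X : K[X]).Splits := by
    rw [splits_iff_card_roots, FiniteField.roots_X_pow_card_sub_X, ← Finset.card_def,
      Finset.card_univ, FiniteField.X_pow_card_sub_X_natDegree_eq _ Fintype.one_lt_card]
  have hroots : (X ^ Fintype.card K - X : F[X]).roots = Finset.univ.val.map K.subtype := by
    simpa [FiniteField.roots_X_pow_card_sub_X] using hsplit.roots_map K.subtype
  have hx' : x ∈ (X ^ Fintype.card K - X : F[X]).roots := by
    simp [FiniteField.X_pow_card_sub_X_ne_zero F Fintype.one_lt_card, hx]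
  simpa [hroots] using hx'

theorem pow_card_sub_one_eq_one {x : F} (hx : x ∈ K) (hx0 : x ≠ 0) :
    x ^ (Nat.card K - 1) = 1 := by
  have := Fintype.ofFinite K
  have h := FiniteField.pow_card_sub_one_eq_one (⟨x, hx⟩ : K) fun h0 =>
    hx0 (by simpa using congrArg Subtype.val h0)
  rw [← Nat.card_eq_fintype_card] at h
  simpa using congrArg Subtype.val h

end Subfield

namespace FiniteField

variable {F : Type*} [Field F] [Fintype F] {d r s : ℕ} {h : F[X]}

theorem coprime_of_injective_pow_mul_eval_pow (hs : s ∣ Fintype.card F - 1)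
    (hinj : Function.Injective fun c : F => c ^ r * h.eval (c ^ s)) : r.Coprime s := by
  by_contra hrs
  obtain ⟨p, hp, hpr, hps⟩ := Nat.Prime.not_coprime_iff_dvd.1 hrs
  have := Fact.mk hp
  obtain ⟨ω, hω⟩ := exists_prime_orderOf_dvd_card' (G := Fˣ) p
    (by rw [Nat.card_units, Nat.card_eq_fintype_card]; exact hps.trans hs)
  have hωF : orderOf (ω : F) = p := orderOf_units.trans hω
  have hωr : (ω : F) ^ r = 1 := orderOf_dvd_iff_pow_eq_one.1 (hωF ▸ hpr)
  have hωs : (ω : F) ^ s = 1 := orderOf_dvd_iff_pow_eq_one.1 (hωF ▸ hps)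
  have hω1 : (ω : F) = 1 := hinj (by simp only [hωr, hωs, one_pow])
  rw [hω1, orderOf_one] at hωF
  exact hp.one_lt.ne hωF

theorem eval_ne_zero_of_injective_pow_mul_eval_pow (hds : d * s = Fintype.card F - 1) (hr : r ≠ 0)
    (hinj : Function.Injective fun c : F => c ^ r * h.eval (c ^ s)) {ζ : F} (hζ : ζ ^ d = 1) :
    h.eval ζ ≠ 0 := by
  intro hζ0
  have hd : d ≠ 0 := by
    rintro rfl
    have := Fintype.one_lt_card (α := F)
    omega
  have hζu : ζ ≠ 0 := by
    rintro rfl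
    exact zero_ne_one ((zero_pow hd).symm.trans hζ)
  obtain ⟨c, hc⟩ := IsCyclic.exists_pow_eq_of_pow_eq_one (G := Fˣ)
    (by rw [Nat.card_units, Nat.card_eq_fintype_card, hds]) (ζ := Units.mk0 ζ hζu)
    (Units.ext (by simpa using hζ))
  have hcs : (c : F) ^ s = ζ := by rw [← Units.val_pow_eq_pow_val, hc, Units.val_mk0]
  exact c.ne_zero (hinj (by simp only [hcs, hζ0, mul_zero, zero_pow hr, zero_mul]))

theorem injective_pow_mul_eval_pow (hds : d * s = Fintype.card F - 1) (hdvd : d ∣ s) (hr : r ≠ 0)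
    (hrs : r.Coprime s) (hμ : ∀ ζ : F, ζ ^ d = 1 → h.eval ζ ^ s = 1) :
    Function.Injective fun c : F => c ^ r * h.eval (c ^ s) := by
  have hunit (c : F) (hc : c ≠ 0) : c ^ (d * s) = 1 :=
    hds ▸ FiniteField.pow_card_sub_one_eq_one c hc
  have hs : s ≠ 0 := by
    rintro rfl
    have := Fintype.one_lt_card (α := F)
    omega
  have hval (c : F) (hc : c ≠ 0) : h.eval (c ^ s) ^ s = 1 :=
    hμ _ (by rw [← pow_mul, mul_comm, hunit c hc])
  have hval0 (c : F) (hc : c ≠ 0) : h.eval (c ^ s) ≠ 0 := by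
    intro h0
    simpa [h0, zero_pow hs] using hval c hc
  have hne (c : F) (hc : c ≠ 0) : c ^ r * h.eval (c ^ s) ≠ 0 :=
    mul_ne_zero (pow_ne_zero r hc) (hval0 c hc)
  intro a b hab
  dsimp only at hab
  rcases eq_or_ne a 0 with rfl | ha <;> rcases eq_or_ne b 0 with rfl | hb
  · rfl
  · rw [zero_pow hr, zero_mul] at hab
    exact absurd hab.symm (hne b hb)
  · rw [zero_pow hr, zero_mul] at hab
    exact absurd hab (hne a ha)
  have hrs' : a ^ (r * s) = b ^ (r * s) := by
    simpa only [mul_pow, hval a ha, hval b hb, mul_one, ← pow_mul] using congrArg (· ^ s) hab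
  have has : a ^ s = b ^ s := by
    have := pow_gcd_eq_pow_gcd hb hrs' (by rw [hunit a ha, hunit b hb])
    rwa [Nat.gcd_mul_right, Nat.Coprime.coprime_dvd_right hdvd hrs, one_mul] at this
  have har : a ^ r = b ^ r := by
    rw [has] at hab
    exact mul_right_cancel₀ (hval0 b hb) hab
  simpa [hrs] using pow_gcd_eq_pow_gcd hb har has

end FiniteField

theorem stmt_2_general {F : Type*} [Field F] [Fintype F] {q q0 m d r : ℕ}
    (hq : Fintype.card F = q) (hqm : q = q0 ^ m)
    (hcong : q0 ≡ 1 [MOD d]) (hdm : d ∣ m) (hr : 0 < r) (hdvd : d ∣ q - 1)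
    (K : Subfield F) (hK : Nat.card K = q0) (h : F[X]) (hcoeff : ∀ i, h.coeff i ∈ K) :
    Function.Bijective (fun c : F => (X ^ r * h.comp (X ^ ((q - 1) / d))).eval c) ↔
      (Nat.gcd r ((q - 1) / d) = 1 ∧ ∀ ζ : F, ζ ^ d = 1 → h.eval ζ ≠ 0) := by
  set s := (q - 1) / d
  have hds : d * s = Fintype.card F - 1 := hq ▸ Nat.mul_div_cancel' hdvd
  have hq0 : 1 ≤ q0 := hK ▸ Nat.card_pos
  have hdq0 : d ∣ q0 - 1 := (Nat.modEq_iff_dvd' hq0).1 hcong.symm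
  have hq0s : q0 - 1 ∣ s :=
    Nat.dvd_div_of_mul_dvd (hqm ▸ Nat.mul_sub_one_dvd_pow_sub_one hcong hdm)
  have hμ (ζ : F) (hζ : ζ ^ d = 1) (hζ0 : h.eval ζ ≠ 0) : h.eval ζ ^ s = 1 := by
    have hζK : ζ ∈ K := K.mem_of_pow_card_eq_self <| by
      obtain ⟨k, hk⟩ := hdq0
      rw [hK, ← Nat.sub_add_cancel hq0, pow_succ, hk, pow_mul, hζ, one_pow, one_mul]
    obtain ⟨k, hk⟩ := hq0s
    rw [hk, pow_mul, ← hK, K.pow_card_sub_one_eq_one (eval_mem_of_coeff_mem hcoeff hζK) hζ0,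
      one_pow]
  simp only [eval_mul, eval_pow, eval_X, eval_comp]
  constructor
  · intro hbij
    exact ⟨FiniteField.coprime_of_injective_pow_mul_eval_pow (hds ▸ Dvd.intro_left d rfl)
        hbij.1,
      fun ζ => FiniteField.eval_ne_zero_of_injective_pow_mul_eval_pow hds hr.ne' hbij.1⟩
  · rintro ⟨hrs, hroot⟩
    have hinj := FiniteField.injective_pow_mul_eval_pow hds (hdq0.trans hq0s) hr.ne' hrs
      fun ζ hζ => hμ ζ hζ (hroot ζ hζ)
    exact ⟨hinj, Finite.surjective_of_injective hinj⟩

/-- Let d, r > 0 with d ∣ q−1. Suppose q = q_0^m where q_0 is a prime power with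
q_0 ≡ 1 (mod d) and d ∣ m, and let h have coefficients in the subfield of F_q of order
q_0. Then f(x) := x^r · h(x^{(q−1)/d}) permutes F_q iff gcd(r, (q−1)/d) = 1 and h has
no roots in μ_d. -/
theorem stmt_2 {F : Type*} [Field F] [Fintype F] {q q0 m d r : ℕ}
    (hq : Fintype.card F = q) (hq0 : IsPrimePow q0) (hqm : q = q0 ^ m)
    (hcong : q0 ≡ 1 [MOD d]) (hdm : d ∣ m) (hd : 0 < d) (hr : 0 < r) (hdvd : d ∣ q - 1)
    (K : Subfield F) (hK : Nat.card K = q0) (h : F[X]) (hcoeff : ∀ i, h.coeff i ∈ K) :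
    Function.Bijective (fun c : F => (X ^ r * h.comp (X ^ ((q - 1) / d))).eval c) ↔
      (Nat.gcd r ((q - 1) / d) = 1 ∧ ∀ ζ : F, ζ ^ d = 1 → h.eval ζ ≠ 0) :=
  stmt_2_general hq hqm hcong hdm hr hdvd K hK h hcoeff
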